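/- arXiv:1901.04538 — 4 statements merged into one kernel-verified Lean document; each statement's English description precedes it below -/
import Mathlib

section
/- Let Γ be a finite simplicial graph and 𝒢 a collection of nontrivial finitely generated groups indexed by V(Γ), with each G_u generated by a finite set X_u, and set X = ⋃_u X_u. For every graphically reduced word s₁⋯sₙ in Γ𝒢, with sᵢ ∈ G_{uᵢ}, the word length of s₁⋯sₙ in Γ𝒢 with respect to X equals the sum over i of the word lengths of sᵢ in G_{uᵢ} with respect to X_{uᵢ}. -/
open Monoid

def graphProductRels {V : Type*} (Γ : SimpleGraph V) (G : V → Type*) [∀ v, Group (G v)] :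
    Set (Monoid.CoprodI G) :=
  {x | ∃ (u v : V) (g : G u) (h : G v), Γ.Adj u v ∧
    x = CoprodI.of g * CoprodI.of h * (CoprodI.of g)⁻¹ * (CoprodI.of h)⁻¹}

def GraphProduct {V : Type*} (Γ : SimpleGraph V) (G : V → Type*) [∀ v, Group (G v)] : Type _ :=
  Monoid.CoprodI G ⧸ Subgroup.normalClosure (graphProductRels Γ G)

instance {V : Type*} (Γ : SimpleGraph V) (G : V → Type*) [∀ v, Group (G v)] :
    Group (GraphProduct Γ G) := by
  unfold GraphProduct; infer_instance

/-- The canonical map from a vertex group to the graph product. -/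
def GraphProduct.of {V : Type*} (Γ : SimpleGraph V) (G : V → Type*) [∀ v, Group (G v)] {u : V} :
    G u →* GraphProduct Γ G :=
  (QuotientGroup.mk' (Subgroup.normalClosure (graphProductRels Γ G))).comp CoprodI.of

/-- The element of the graph product represented by a word over the union of vertex groups. -/
def wordProd {V : Type*} (Γ : SimpleGraph V) (G : V → Type*) [∀ v, Group (G v)]
    (l : List (Σ u, G u)) : GraphProduct Γ G :=
  (l.map fun s => GraphProduct.of Γ G s.2).prod

/-- A word over the union of the vertex groups is graphically reduced if all its syllables
are nontrivial and any two syllables in the same vertex group are separated by a syllable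
in a non-adjacent vertex group. -/
def GraphicallyReduced {V : Type*} (Γ : SimpleGraph V) (G : V → Type*) [∀ v, Group (G v)]
    (l : List (Σ u, G u)) : Prop :=
  (∀ s ∈ l, s.2 ≠ (1 : G s.1)) ∧
  ∀ (i j : ℕ) (hi : i < l.length) (hj : j < l.length), i < j →
    (l.get ⟨i, hi⟩).1 = (l.get ⟨j, hj⟩).1 →
    ∃ (k : ℕ) (hk : k < l.length), i < k ∧ k < j ∧
      ¬ Γ.Adj (l.get ⟨i, hi⟩).1 (l.get ⟨k, hk⟩).1

/-- Swapping two consecutive syllables lying in adjacent vertex groups. -/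
def AdjSwap {V : Type*} (Γ : SimpleGraph V) (G : V → Type*) [∀ v, Group (G v)]
    (l l' : List (Σ u, G u)) : Prop :=
  ∃ (w₁ w₂ : List (Σ u, G u)) (s t : Σ u, G u), Γ.Adj s.1 t.1 ∧
    l = w₁ ++ s :: t :: w₂ ∧ l' = w₁ ++ t :: s :: w₂
/-- Graphically cyclically reduced words. -/
def GraphCyclicallyReduced {V : Type*} (Γ : SimpleGraph V) (G : V → Type*) [∀ v, Group (G v)]
    (l : List (Σ u, G u)) : Prop :=
  GraphicallyReduced Γ G l ∧
  ¬ ∃ (i j : ℕ) (hi : i < l.length) (hj : j < l.length), i < j ∧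
      (l.get ⟨i, hi⟩).1 = (l.get ⟨j, hj⟩).1 ∧
      (∀ (k : ℕ) (hk : k < l.length), k < i → Γ.Adj (l.get ⟨i, hi⟩).1 (l.get ⟨k, hk⟩).1) ∧
      (∀ (k : ℕ) (hk : k < l.length), j < k → Γ.Adj (l.get ⟨j, hj⟩).1 (l.get ⟨k, hk⟩).1)

/-- Word length with respect to a generating set. -/
noncomputable def wlen {H : Type*} [Group H] (S : Set H) (g : H) : ℕ :=
  sInf {n | ∃ l : List H, (∀ x ∈ l, x ∈ S ∨ x⁻¹ ∈ S) ∧ l.prod = g ∧ l.length = n}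

/-- Conjugacy length function with respect to a generating set. -/
noncomputable def CLF {H : Type*} [Group H] (S : Set H) (n : ℕ) : ℕ∞ :=
  ⨆ (a : H) (b : H) (_ : (∃ c, c * a * c⁻¹ = b) ∧ wlen S a + wlen S b ≤ n),
    ((sInf {k | ∃ c, c * a * c⁻¹ = b ∧ wlen S c = k} : ℕ) : ℕ∞)

/-- The generating set of a graph product induced by generating sets of the vertex groups. -/
noncomputable def genSet {V : Type*} (Γ : SimpleGraph V) (G : V → Type*) [∀ v, Group (G v)]
    (X : ∀ v, Set (G v)) : Set (GraphProduct Γ G) :=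
  ⋃ u : V, ⇑(GraphProduct.of Γ G (u := u)) '' X u

-- ================= development ====================
namespace GPAux

variable {V : Type*} (Γ : SimpleGraph V) (G : V → Type*) [∀ v, Group (G v)]

attribute [local instance] Classical.propDecidable

/-- Insertion of a syllable into a word. -/
noncomputable def ins (s : Σ u, G u) : List (Σ u, G u) → List (Σ u, G u)
  | [] => [s]
  | t :: l =>
    if h : t.1 = s.1 then
      (if s.2 * (h ▸ t.2) = 1 then l else ⟨s.1, s.2 * (h ▸ t.2)⟩ :: l)
    else if Γ.Adj s.1 t.1 then t :: ins s l
    else s :: t :: l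

/-- Guarded insertion. -/
noncomputable def ins' (s : Σ u, G u) (l : List (Σ u, G u)) : List (Σ u, G u) :=
  if s.2 = 1 then l else ins Γ G s l

variable {Γ G}

@[simp] lemma ins_nil (s : Σ u, G u) : ins Γ G s [] = [s] := by simp [ins]

lemma ins_cons_same {u : V} (g k : G u) (l : List (Σ u, G u)) :
    ins Γ G ⟨u, g⟩ (⟨u, k⟩ :: l) = if g * k = 1 then l else ⟨u, g * k⟩ :: l := by
  simp [ins]

lemma ins_cons_adj {u : V} (g : G u) (t : Σ u, G u) (l : List (Σ u, G u))
    (hne : t.1 ≠ u) (hadj : Γ.Adj u t.1) :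
    ins Γ G ⟨u, g⟩ (t :: l) = t :: ins Γ G ⟨u, g⟩ l := by
  simp [ins, hne, hadj]

lemma ins_cons_blocked {u : V} (g : G u) (t : Σ u, G u) (l : List (Σ u, G u))
    (hne : t.1 ≠ u) (hadj : ¬ Γ.Adj u t.1) :
    ins Γ G ⟨u, g⟩ (t :: l) = ⟨u, g⟩ :: t :: l := by
  simp [ins, hne, hadj]

end GPAux

-- chunk 2: equivalence + reducedness predicates
namespace GPAux

variable {V : Type*} {Γ : SimpleGraph V} {G : V → Type*} [∀ v, Group (G v)]

/-- Swap equivalence of words. -/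
def eqv (Γ : SimpleGraph V) (G : V → Type*) [∀ v, Group (G v)]
    (l l' : List (Σ u, G u)) : Prop :=
  Relation.ReflTransGen (AdjSwap Γ G) l l'

lemma adjSwap_symm {l l' : List (Σ u, G u)} (h : AdjSwap Γ G l l') : AdjSwap Γ G l' l := by
  obtain ⟨w₁, w₂, s, t, hadj, h1, h2⟩ := h
  exact ⟨w₁, w₂, t, s, hadj.symm, h2, h1⟩

@[refl] lemma eqv_refl (l : List (Σ u, G u)) : eqv Γ G l l := Relation.ReflTransGen.refl

lemma eqv_trans {a b c : List (Σ u, G u)} (h : eqv Γ G a b) (h' : eqv Γ G b c) :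
    eqv Γ G a c := Relation.ReflTransGen.trans h h'

lemma eqv_symm {a b : List (Σ u, G u)} (h : eqv Γ G a b) : eqv Γ G b a := by
  induction h with
  | refl => rfl
  | tail _ hbc ih => exact eqv_trans (Relation.ReflTransGen.single (adjSwap_symm hbc)) ih

lemma eqv_single {a b : List (Σ u, G u)} (h : AdjSwap Γ G a b) : eqv Γ G a b :=
  Relation.ReflTransGen.single h

lemma adjSwap_cons {a b : List (Σ u, G u)} (s : Σ u, G u) (h : AdjSwap Γ G a b) :
    AdjSwap Γ G (s :: a) (s :: b) := by
  obtain ⟨w₁, w₂, x, y, hadj, h1, h2⟩ := h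
  exact ⟨s :: w₁, w₂, x, y, hadj, by simp [h1], by simp [h2]⟩

lemma eqv_cons {a b : List (Σ u, G u)} (s : Σ u, G u) (h : eqv Γ G a b) :
    eqv Γ G (s :: a) (s :: b) := by
  induction h with
  | refl => rfl
  | tail _ hbc ih => exact ih.tail (adjSwap_cons s hbc)

lemma eqv_swap_head {s t : Σ u, G u} (hadj : Γ.Adj s.1 t.1) (w : List (Σ u, G u)) :
    eqv Γ G (s :: t :: w) (t :: s :: w) :=
  eqv_single ⟨[], w, s, t, hadj, rfl, rfl⟩

/-- `u` is blocked in a vertex word: scanning from the left we meet a vertex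
non-adjacent to `u` (and different from it) before meeting `u`. -/
def BlockedV (Γ : SimpleGraph V) (u : V) : List V → Prop
  | [] => True
  | v :: t => v ≠ u ∧ (Γ.Adj u v → BlockedV Γ u t)

/-- Reduced vertex words. -/
def SepV (Γ : SimpleGraph V) : List V → Prop
  | [] => True
  | v :: t => BlockedV Γ v t ∧ SepV Γ t

/-- Graphically reduced, structural form. -/
def Red (Γ : SimpleGraph V) (G : V → Type*) [∀ v, Group (G v)]
    (l : List (Σ u, G u)) : Prop :=
  (∀ s ∈ l, s.2 ≠ 1) ∧ SepV Γ (l.map Sigma.fst)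

lemma red_nil : Red Γ G ([] : List (Σ u, G u)) := ⟨by simp, trivial⟩

lemma red_tail {s : Σ u, G u} {l : List (Σ u, G u)} (h : Red Γ G (s :: l)) : Red Γ G l :=
  ⟨fun x hx => h.1 x (List.mem_cons_of_mem _ hx), (h.2).2⟩

lemma red_head_blocked {s : Σ u, G u} {l : List (Σ u, G u)} (h : Red Γ G (s :: l)) :
    BlockedV Γ s.1 (l.map Sigma.fst) := (h.2).1

lemma red_head_ne_one {s : Σ u, G u} {l : List (Σ u, G u)} (h : Red Γ G (s :: l)) :
    s.2 ≠ 1 := h.1 s (List.mem_cons_self)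

/-- Blocking is insensitive to inserting a vertex adjacent to `u`. -/
lemma blockedV_insert {u w : V} (hadj : Γ.Adj u w) :
    ∀ (P Q : List V), BlockedV Γ w (P ++ Q) → BlockedV Γ w (P ++ u :: Q)
  | [], Q, h => ⟨fun e => (Γ.ne_of_adj hadj) e, fun _ => h⟩
  | v :: P, Q, h => ⟨h.1, fun hv => blockedV_insert hadj P Q (h.2 hv)⟩

/-- Blocking is insensitive to deleting a vertex adjacent to `u`. -/
lemma blockedV_delete {u w : V} (hadj : Γ.Adj u w) :
    ∀ (P Q : List V), BlockedV Γ w (P ++ u :: Q) → BlockedV Γ w (P ++ Q)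
  | [], Q, h => h.2 hadj.symm
  | v :: P, Q, h => ⟨h.1, fun hv => blockedV_delete hadj P Q (h.2 hv)⟩

/-- Blocking is invariant under adjacent swaps. -/
lemma blockedV_swap {u a b : V} (hadj : Γ.Adj a b) :
    ∀ (P Q : List V), BlockedV Γ u (P ++ a :: b :: Q) → BlockedV Γ u (P ++ b :: a :: Q)
  | [], Q, h => by
    refine ⟨fun e => ?_, fun hub => ⟨h.1, fun hua => (h.2 hua).2 hub⟩⟩
    subst e
    exact (h.2 hadj.symm).1 rfl
  | v :: P, Q, h => ⟨h.1, fun hv => blockedV_swap hadj P Q (h.2 hv)⟩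

end GPAux
-- chunk 3: ins spec and preservation lemmas
namespace GPAux

variable {V : Type*} {Γ : SimpleGraph V} {G : V → Type*} [∀ v, Group (G v)]

attribute [local instance] Classical.propDecidable

lemma blockedV_map_swap {u : V} {l l' : List (Σ u, G u)} (h : AdjSwap Γ G l l') :
    BlockedV Γ u (l.map Sigma.fst) → BlockedV Γ u (l'.map Sigma.fst) := by
  obtain ⟨w₁, w₂, s, t, hadj, h1, h2⟩ := h
  subst h1; subst h2
  simpa using blockedV_swap hadj (w₁.map Sigma.fst) (w₂.map Sigma.fst)

lemma blockedV_map_eqv {u : V} {l l' : List (Σ u, G u)} (h : eqv Γ G l l') :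
    BlockedV Γ u (l.map Sigma.fst) → BlockedV Γ u (l'.map Sigma.fst) := by
  induction h with
  | refl => exact id
  | tail _ hbc ih => exact fun h0 => blockedV_map_swap hbc (ih h0)

lemma ins_spec {u : V} (g : G u) (hg : g ≠ 1) (l : List (Σ u, G u)) :
    (∃ (p : List (Σ u, G u)) (k : G u) (q : List (Σ u, G u)), l = p ++ ⟨u, k⟩ :: q ∧ (∀ c ∈ p, Γ.Adj u c.1) ∧
      ins Γ G ⟨u, g⟩ l = if g * k = 1 then p ++ q else p ++ ⟨u, g * k⟩ :: q) ∨
    (∃ p q, l = p ++ q ∧ (∀ c ∈ p, Γ.Adj u c.1) ∧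
      ins Γ G ⟨u, g⟩ l = p ++ ⟨u, g⟩ :: q ∧
      (q = [] ∨ ∃ t q', q = t :: q' ∧ t.1 ≠ u ∧ ¬ Γ.Adj u t.1)) := by
  induction l with
  | nil => exact Or.inr ⟨[], [], rfl, by simp, by simp, Or.inl rfl⟩
  | cons t l ih =>
    obtain ⟨v, k⟩ := t
    by_cases hv : v = u
    · subst hv
      exact Or.inl ⟨[], k, l, rfl, by simp, by simpa using ins_cons_same g k l⟩
    · by_cases hadj : Γ.Adj u v
      · rw [ins_cons_adj g ⟨v, k⟩ l hv hadj]
        rcases ih with ⟨p, k', q, hl, hp, hins⟩ | ⟨p, q, hl, hp, hins, hq⟩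
        · refine Or.inl ⟨⟨v, k⟩ :: p, k', q, by simp [hl], ?_, ?_⟩
          · intro c hc
            rcases List.mem_cons.mp hc with rfl | hc
            · exact hadj
            · exact hp c hc
          · rw [hins]; split <;> simp
        · refine Or.inr ⟨⟨v, k⟩ :: p, q, by simp [hl], ?_, by simp [hins], hq⟩
          intro c hc
          rcases List.mem_cons.mp hc with rfl | hc
          · exact hadj
          · exact hp c hc
      · rw [ins_cons_blocked g ⟨v, k⟩ l hv hadj]
        exact Or.inr ⟨[], ⟨v, k⟩ :: l, rfl, by simp, by simp,
          Or.inr ⟨⟨v, k⟩, l, rfl, hv, hadj⟩⟩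

lemma noOnes_ins {u : V} {g : G u} (hg : g ≠ 1) {l : List (Σ u, G u)}
    (h : ∀ x ∈ l, x.2 ≠ 1) : ∀ x ∈ ins Γ G ⟨u, g⟩ l, x.2 ≠ 1 := by
  induction l with
  | nil => simpa using hg
  | cons t l ih =>
    obtain ⟨v, k⟩ := t
    by_cases hv : v = u
    · subst hv
      rw [ins_cons_same]
      by_cases h1 : g * k = 1
      · rw [if_pos h1]
        exact fun x hx => h x (List.mem_cons_of_mem _ hx)
      · rw [if_neg h1]
        intro x hx
        rcases List.mem_cons.mp hx with rfl | hx
        · exact h1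
        · exact h x (List.mem_cons_of_mem _ hx)
    · by_cases hadj : Γ.Adj u v
      · rw [ins_cons_adj g ⟨v, k⟩ l hv hadj]
        intro x hx
        rcases List.mem_cons.mp hx with rfl | hx
        · exact h _ (List.mem_cons_self)
        · exact ih (fun y hy => h y (List.mem_cons_of_mem _ hy)) x hx
      · rw [ins_cons_blocked g ⟨v, k⟩ l hv hadj]
        intro x hx
        rcases List.mem_cons.mp hx with rfl | hx
        · exact hg
        · exact h x hx

lemma blockedV_map_ins {u w : V} {g : G u} (hg : g ≠ 1) (hadj : Γ.Adj u w)
    {l : List (Σ u, G u)} (h : BlockedV Γ w (l.map Sigma.fst)) :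
    BlockedV Γ w ((ins Γ G ⟨u, g⟩ l).map Sigma.fst) := by
  rcases ins_spec g hg l with ⟨p, k, q, hl, hp, hins⟩ | ⟨p, q, hl, hp, hins, hq⟩
  · subst hl
    rw [hins]
    split
    · simpa using blockedV_delete hadj _ _ (by simpa using h)
    · simpa using h
  · subst hl
    rw [hins]
    simp only [List.map_append, List.map_cons]
    exact blockedV_insert hadj _ _ (by simpa using h)

/-- Insertion into a word blocked for `u` just prepends, up to swaps. -/
lemma ins_blocked {u : V} (g : G u) {l : List (Σ u, G u)}
    (h : BlockedV Γ u (l.map Sigma.fst)) :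
    eqv Γ G (ins Γ G ⟨u, g⟩ l) (⟨u, g⟩ :: l) := by
  induction l with
  | nil => rfl
  | cons t l ih =>
    obtain ⟨v, k⟩ := t
    obtain ⟨hvu, himp⟩ := h
    by_cases hadj : Γ.Adj u v
    · rw [ins_cons_adj g ⟨v, k⟩ l hvu hadj]
      refine eqv_trans (eqv_cons _ (ih (himp hadj))) ?_
      exact eqv_swap_head (s := ⟨v, k⟩) (t := ⟨u, g⟩) hadj.symm l
    · rw [ins_cons_blocked g ⟨v, k⟩ l hvu hadj]

/-- Insertion preserves reducedness. -/
lemma red_ins {u : V} (g : G u) {l : List (Σ u, G u)} (h : Red Γ G l) :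
    Red Γ G (ins' Γ G ⟨u, g⟩ l) := by
  rw [ins']
  by_cases hg : (⟨u, g⟩ : Σ u, G u).2 = 1
  · rw [if_pos hg]; exact h
  rw [if_neg hg]
  induction l with
  | nil => exact ⟨by simpa using hg, trivial, trivial⟩
  | cons t l ih =>
    obtain ⟨v, k⟩ := t
    by_cases hv : v = u
    · subst hv
      rw [ins_cons_same]
      by_cases h1 : g * k = 1
      · rw [if_pos h1]; exact red_tail h
      · rw [if_neg h1]
        refine ⟨?_, h.2⟩
        intro x hx
        rcases List.mem_cons.mp hx with rfl | hx
        · exact h1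
        · exact h.1 x (List.mem_cons_of_mem _ hx)
    · by_cases hadj : Γ.Adj u v
      · rw [ins_cons_adj g ⟨v, k⟩ l hv hadj]
        have hred := ih (red_tail h)
        refine ⟨?_, ?_, hred.2⟩
        · intro x hx
          rcases List.mem_cons.mp hx with rfl | hx
          · exact h.1 _ (List.mem_cons_self)
          · exact hred.1 x hx
        · exact blockedV_map_ins hg hadj (red_head_blocked h)
      · rw [ins_cons_blocked g ⟨v, k⟩ l hv hadj]
        refine ⟨?_, ⟨hv, fun hc => absurd hc hadj⟩, h.2⟩
        intro x hx
        rcases List.mem_cons.mp hx with rfl | hx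
        · exact hg
        · exact h.1 x hx

end GPAux
-- chunk 4: core equations for ins
namespace GPAux

variable {V : Type*} {Γ : SimpleGraph V} {G : V → Type*} [∀ v, Group (G v)]

attribute [local instance] Classical.propDecidable

lemma ins_swap {u : V} (g : G u) :
    ∀ (w₁ w₂ : List (Σ u, G u)) (a b : Σ u, G u), Γ.Adj a.1 b.1 →
      eqv Γ G (ins Γ G ⟨u, g⟩ (w₁ ++ a :: b :: w₂)) (ins Γ G ⟨u, g⟩ (w₁ ++ b :: a :: w₂)) := by
  intro w₁
  induction w₁ with
  | nil =>
    intro w₂ a b hab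
    obtain ⟨x, p⟩ := a
    obtain ⟨y, q⟩ := b
    simp only [List.nil_append]
    by_cases hx : x = u
    · subst hx
      rw [ins_cons_same g p, ins_cons_adj g ⟨y, q⟩ _ hab.ne' hab, ins_cons_same g p w₂]
      split
      · rfl
      · exact eqv_swap_head (s := ⟨x, g * p⟩) (t := ⟨y, q⟩) hab w₂
    · by_cases hy : y = u
      · subst hy
        rw [ins_cons_same g q, ins_cons_adj g ⟨x, p⟩ _ hx hab.symm, ins_cons_same g q w₂]
        split
        · rfl
        · exact eqv_symm (eqv_swap_head (s := ⟨y, g * q⟩) (t := ⟨x, p⟩) hab.symm w₂)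
      · by_cases hax : Γ.Adj u x <;> by_cases hay : Γ.Adj u y
        · rw [ins_cons_adj g ⟨x, p⟩ _ hx hax, ins_cons_adj g ⟨y, q⟩ _ hy hay,
            ins_cons_adj g ⟨y, q⟩ _ hy hay, ins_cons_adj g ⟨x, p⟩ _ hx hax]
          exact eqv_swap_head (s := ⟨x, p⟩) (t := ⟨y, q⟩) hab _
        · rw [ins_cons_adj g ⟨x, p⟩ _ hx hax, ins_cons_blocked g ⟨y, q⟩ _ hy hay,
            ins_cons_blocked g ⟨y, q⟩ _ hy hay]
          exact eqv_symm (eqv_trans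
            (eqv_cons ⟨u, g⟩ (eqv_swap_head (s := ⟨y, q⟩) (t := ⟨x, p⟩) hab.symm w₂))
            (eqv_swap_head (s := ⟨u, g⟩) (t := ⟨x, p⟩) hax (⟨y, q⟩ :: w₂)))
        · rw [ins_cons_blocked g ⟨x, p⟩ _ hx hax, ins_cons_adj g ⟨y, q⟩ _ hy hay,
            ins_cons_blocked g ⟨x, p⟩ _ hx hax]
          exact eqv_trans
            (eqv_cons ⟨u, g⟩ (eqv_swap_head (s := ⟨x, p⟩) (t := ⟨y, q⟩) hab w₂))
            (eqv_swap_head (s := ⟨u, g⟩) (t := ⟨y, q⟩) hay (⟨x, p⟩ :: w₂))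
        · rw [ins_cons_blocked g ⟨x, p⟩ _ hx hax, ins_cons_blocked g ⟨y, q⟩ _ hy hay]
          exact eqv_cons _ (eqv_swap_head (s := ⟨x, p⟩) (t := ⟨y, q⟩) hab w₂)
  | cons t w₁ ih =>
    intro w₂ a b hab
    obtain ⟨v, r⟩ := t
    by_cases hv : v = u
    · subst hv
      simp only [List.cons_append, ins_cons_same]
      split
      · exact eqv_single ⟨w₁, w₂, a, b, hab, rfl, rfl⟩
      · exact eqv_cons _ (eqv_single ⟨w₁, w₂, a, b, hab, rfl, rfl⟩)
    · by_cases hadj : Γ.Adj u v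
      · simp only [List.cons_append, ins_cons_adj g ⟨v, r⟩ _ hv hadj]
        exact eqv_cons _ (ih w₂ a b hab)
      · simp only [List.cons_append, ins_cons_blocked g ⟨v, r⟩ _ hv hadj]
        exact eqv_cons _ (eqv_cons _ (eqv_single ⟨w₁, w₂, a, b, hab, rfl, rfl⟩))

/-- Guarded insertion respects swap-equivalence. -/
lemma ins'_eqv (s : Σ u, G u) {l l' : List (Σ u, G u)} (h : eqv Γ G l l') :
    eqv Γ G (ins' Γ G s l) (ins' Γ G s l') := by
  induction h with
  | refl => rfl
  | tail _ hbc ih =>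
    refine eqv_trans ih ?_
    obtain ⟨w₁, w₂, a, b, hab, h1, h2⟩ := hbc
    subst h1; subst h2
    obtain ⟨u, g⟩ := s
    rw [ins']
    by_cases hg : (⟨u, g⟩ : Σ u, G u).2 = 1
    · rw [if_pos hg]
      simp only [ins', if_pos hg]
      exact eqv_single ⟨w₁, w₂, a, b, hab, rfl, rfl⟩
    · rw [if_neg hg]
      simp only [ins', if_neg hg]
      exact ins_swap g w₁ w₂ a b hab

end GPAux
-- chunk 5: commutation and multiplicativity
namespace GPAux

variable {V : Type*} {Γ : SimpleGraph V} {G : V → Type*} [∀ v, Group (G v)]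

attribute [local instance] Classical.propDecidable

lemma ins_comm_adj {u v : V} (huv : Γ.Adj u v) (g : G u) (h : G v)
    (l : List (Σ u, G u)) :
    eqv Γ G (ins Γ G ⟨u, g⟩ (ins Γ G ⟨v, h⟩ l)) (ins Γ G ⟨v, h⟩ (ins Γ G ⟨u, g⟩ l)) := by
  induction l with
  | nil =>
    rw [ins_nil, ins_nil, ins_cons_adj g ⟨v, h⟩ _ huv.ne' huv,
      ins_cons_adj h ⟨u, g⟩ _ huv.ne huv.symm, ins_nil, ins_nil]
    exact eqv_swap_head (s := ⟨v, h⟩) (t := ⟨u, g⟩) huv.symm []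
  | cons t l ih =>
    obtain ⟨x, p⟩ := t
    by_cases hxv : x = v
    · subst hxv
      rw [ins_cons_same h p, ins_cons_adj g (⟨x, p⟩ : Σ u, G u) l huv.ne' huv,
        ins_cons_same h p]
      by_cases hp : h * p = 1
      · rw [if_pos hp, if_pos hp]
      · rw [if_neg hp, if_neg hp, ins_cons_adj g (⟨x, h * p⟩ : Σ u, G u) l huv.ne' huv]
    · by_cases hxu : x = u
      · subst hxu
        rw [ins_cons_same g p, ins_cons_adj h (⟨x, p⟩ : Σ u, G u) l huv.ne huv.symm,
          ins_cons_same g p]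
        by_cases hp : g * p = 1
        · rw [if_pos hp, if_pos hp]
        · rw [if_neg hp, if_neg hp, ins_cons_adj h (⟨x, g * p⟩ : Σ u, G u) l huv.ne huv.symm]
      · by_cases hux : Γ.Adj u x <;> by_cases hvx : Γ.Adj v x
        · rw [ins_cons_adj h ⟨x, p⟩ l hxv hvx, ins_cons_adj g ⟨x, p⟩ _ hxu hux,
            ins_cons_adj g ⟨x, p⟩ l hxu hux, ins_cons_adj h ⟨x, p⟩ _ hxv hvx]
          exact eqv_cons _ ih
        · rw [ins_cons_blocked h ⟨x, p⟩ l hxv hvx,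
            ins_cons_adj g ⟨v, h⟩ _ huv.ne' huv,
            ins_cons_adj g ⟨x, p⟩ l hxu hux,
            ins_cons_blocked h ⟨x, p⟩ (ins Γ G ⟨u, g⟩ l) hxv hvx]
        · rw [ins_cons_adj h ⟨x, p⟩ l hxv hvx,
            ins_cons_blocked g ⟨x, p⟩ (ins Γ G ⟨v, h⟩ l) hxu hux,
            ins_cons_blocked g ⟨x, p⟩ l hxu hux,
            ins_cons_adj h ⟨u, g⟩ (⟨x, p⟩ :: l) huv.ne huv.symm,
            ins_cons_adj h ⟨x, p⟩ l hxv hvx]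
        · rw [ins_cons_blocked h ⟨x, p⟩ l hxv hvx,
            ins_cons_adj g ⟨v, h⟩ (⟨x, p⟩ :: l) huv.ne' huv,
            ins_cons_blocked g ⟨x, p⟩ l hxu hux,
            ins_cons_adj h ⟨u, g⟩ (⟨x, p⟩ :: l) huv.ne huv.symm,
            ins_cons_blocked h ⟨x, p⟩ l hxv hvx]
          exact eqv_swap_head (s := ⟨v, h⟩) (t := ⟨u, g⟩) huv.symm _

/-- Commutation for guarded insertion. -/
lemma ins'_comm_adj {u v : V} (huv : Γ.Adj u v) (g : G u) (h : G v)
    (l : List (Σ u, G u)) :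
    eqv Γ G (ins' Γ G ⟨u, g⟩ (ins' Γ G ⟨v, h⟩ l)) (ins' Γ G ⟨v, h⟩ (ins' Γ G ⟨u, g⟩ l)) := by
  rcases eq_or_ne g 1 with hg | hg
  · simp only [ins', hg, if_pos]
    exact eqv_refl _
  rcases eq_or_ne h 1 with hh | hh
  · simp only [ins', hh, if_pos]
    exact eqv_refl _
  · simp only [ins', if_neg hg, if_neg hh]
    exact ins_comm_adj huv g h l

lemma ins_mul_aux {u : V} (g h : G u) (hg : g ≠ 1) (hh : h ≠ 1) :
    ∀ (l : List (Σ u, G u)), Red Γ G l →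
      eqv Γ G (ins Γ G ⟨u, g⟩ (ins Γ G ⟨u, h⟩ l))
        (if g * h = 1 then l else ins Γ G ⟨u, g * h⟩ l) := by
  intro l
  induction l with
  | nil =>
    intro _
    rw [ins_nil, ins_cons_same g h []]
    by_cases hgh : g * h = 1
    · rw [if_pos hgh, if_pos hgh]
    · rw [if_neg hgh, if_neg hgh, ins_nil]
  | cons t l ih =>
    intro hl
    obtain ⟨x, p⟩ := t
    by_cases hxu : x = u
    · subst hxu
      rw [ins_cons_same h p]
      by_cases hp : h * p = 1
      · rw [if_pos hp]
        by_cases hgh : g * h = 1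
        · rw [if_pos hgh]
          have hgp : g = p := by
            calc g = g * (h * p) := by rw [hp, mul_one]
            _ = g * h * p := (mul_assoc _ _ _).symm
            _ = p := by rw [hgh, one_mul]
          rw [← hgp]
          exact ins_blocked g (red_head_blocked hl)
        · rw [if_neg hgh, ins_cons_same (g * h) p]
          have hval : g * h * p = g := by rw [mul_assoc, hp, mul_one]
          rw [if_neg (by rw [hval]; exact hg), hval]
          exact ins_blocked g (red_head_blocked hl)
      · rw [if_neg hp, ins_cons_same g (h * p)]
        by_cases hgh : g * h = 1
        · rw [if_pos hgh]
          have hval : g * (h * p) = p := by rw [← mul_assoc, hgh, one_mul]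
          rw [if_neg (by rw [hval]; exact hl.1 ⟨x, p⟩ (List.mem_cons_self)), hval]
        · rw [if_neg hgh, ins_cons_same (g * h) p, ← mul_assoc]
    · by_cases hadj : Γ.Adj u x
      · rw [ins_cons_adj h ⟨x, p⟩ l hxu hadj, ins_cons_adj g ⟨x, p⟩ _ hxu hadj]
        have ihl := ih (red_tail hl)
        by_cases hgh : g * h = 1
        · rw [if_pos hgh]
          rw [if_pos hgh] at ihl
          exact eqv_cons _ ihl
        · rw [if_neg hgh, ins_cons_adj (g * h) ⟨x, p⟩ l hxu hadj]
          rw [if_neg hgh] at ihl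
          exact eqv_cons _ ihl
      · rw [ins_cons_blocked h ⟨x, p⟩ l hxu hadj, ins_cons_same g h]
        by_cases hgh : g * h = 1
        · rw [if_pos hgh, if_pos hgh]
        · rw [if_neg hgh, if_neg hgh, ins_cons_blocked (g * h) ⟨x, p⟩ l hxu hadj]

/-- Multiplicativity of guarded insertion on reduced words. -/
lemma ins'_mul {u : V} (g h : G u) {l : List (Σ u, G u)} (hl : Red Γ G l) :
    eqv Γ G (ins' Γ G ⟨u, g⟩ (ins' Γ G ⟨u, h⟩ l)) (ins' Γ G ⟨u, g * h⟩ l) := by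
  rcases eq_or_ne g 1 with hg | hg
  · simp [ins', hg]
    exact eqv_refl _
  rcases eq_or_ne h 1 with hh | hh
  · simp [ins', hh]
    exact eqv_refl _
  simp only [ins', if_neg hg, if_neg hh]
  by_cases hgh : g * h = 1
  · rw [if_pos hgh]
    have := ins_mul_aux g h hg hh l hl
    rwa [if_pos hgh] at this
  · rw [if_neg hgh]
    have := ins_mul_aux g h hg hh l hl
    rwa [if_neg hgh] at this

end GPAux
-- chunk 6: word length lemmas and syllable-length sums
namespace GPAux

variable {V : Type*} {Γ : SimpleGraph V} {G : V → Type*} [∀ v, Group (G v)]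

attribute [local instance] Classical.propDecidable

section WLen

variable {H : Type*} [Group H]

lemma exists_word {X : Set H} (hgen : Subgroup.closure X = ⊤) (g : H) :
    ∃ l : List H, (∀ x ∈ l, x ∈ X ∨ x⁻¹ ∈ X) ∧ l.prod = g := by
  have hg : g ∈ Subgroup.closure X := by rw [hgen]; trivial
  induction hg using Subgroup.closure_induction with
  | mem x hx => exact ⟨[x], by simp [hx], by simp⟩
  | one => exact ⟨[], by simp, by simp⟩
  | mul x y hx hy ihx ihy =>
    obtain ⟨lx, hlx, hpx⟩ := ihx
    obtain ⟨ly, hly, hpy⟩ := ihy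
    exact ⟨lx ++ ly, by
      intro z hz
      rcases List.mem_append.mp hz with hz | hz
      exacts [hlx z hz, hly z hz], by simp [hpx, hpy]⟩
  | inv x hx ihx =>
    obtain ⟨lx, hlx, hpx⟩ := ihx
    refine ⟨(lx.map (·⁻¹)).reverse, ?_, ?_⟩
    · intro z hz
      simp only [List.mem_reverse, List.mem_map] at hz
      obtain ⟨y, hy, rfl⟩ := hz
      rcases hlx y hy with h | h
      · exact Or.inr (by simpa using h)
      · exact Or.inl h
    · rw [List.prod_reverse_noncomm, ← hpx]
      simp

lemma wlen_set_nonempty {X : Set H} (hgen : Subgroup.closure X = ⊤) (g : H) :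
    {n | ∃ l : List H, (∀ x ∈ l, x ∈ X ∨ x⁻¹ ∈ X) ∧ l.prod = g ∧ l.length = n}.Nonempty := by
  obtain ⟨l, h1, h2⟩ := exists_word hgen g
  exact ⟨l.length, l, h1, h2, rfl⟩

lemma wlen_spec {X : Set H} (hgen : Subgroup.closure X = ⊤) (g : H) :
    ∃ l : List H, (∀ x ∈ l, x ∈ X ∨ x⁻¹ ∈ X) ∧ l.prod = g ∧ l.length = wlen X g :=
  Nat.sInf_mem (wlen_set_nonempty hgen g)

lemma wlen_le {X : Set H} {g : H} {l : List H} (hl : ∀ x ∈ l, x ∈ X ∨ x⁻¹ ∈ X)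
    (hp : l.prod = g) : wlen X g ≤ l.length :=
  Nat.sInf_le ⟨l, hl, hp, rfl⟩

@[simp] lemma wlen_one (X : Set H) : wlen X (1 : H) = 0 :=
  Nat.le_zero.mp (wlen_le (by simp) (l := []) rfl)

lemma wlen_mul_le {X : Set H} (hgen : Subgroup.closure X = ⊤) (a b : H) :
    wlen X (a * b) ≤ wlen X a + wlen X b := by
  obtain ⟨la, h1a, h2a, h3a⟩ := wlen_spec hgen a
  obtain ⟨lb, h1b, h2b, h3b⟩ := wlen_spec hgen b
  have := wlen_le (X := X) (g := a * b) (l := la ++ lb) ?_ (by simp [h2a, h2b])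
  · simpa [h3a, h3b] using this
  · intro z hz
    rcases List.mem_append.mp hz with hz | hz
    exacts [h1a z hz, h1b z hz]

lemma wlen_gen_le {X : Set H} {x : H} (hx : x ∈ X ∨ x⁻¹ ∈ X) : wlen X x ≤ 1 :=
  wlen_le (l := [x]) (by simpa using hx) (by simp)

end WLen

variable (X : ∀ v, Set (G v))

/-- Sum of the syllable lengths of a word. -/
noncomputable def sumW (l : List (Σ u, G u)) : ℕ := (l.map fun s => wlen (X s.1) s.2).sum

@[simp] lemma sumW_nil : sumW (G := G) X [] = 0 := rfl

@[simp] lemma sumW_cons (s : Σ u, G u) (l : List (Σ u, G u)) :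
    sumW X (s :: l) = wlen (X s.1) s.2 + sumW X l := by simp [sumW]

lemma sumW_append (l l' : List (Σ u, G u)) :
    sumW X (l ++ l') = sumW X l + sumW X l' := by simp [sumW]

lemma sumW_eqv {l l' : List (Σ u, G u)} (h : eqv Γ G l l') : sumW X l = sumW X l' := by
  induction h with
  | refl => rfl
  | tail _ hbc ih =>
    obtain ⟨w₁, w₂, s, t, _, h1, h2⟩ := hbc
    subst h1; subst h2
    rw [ih]
    simp [sumW_append, sumW_cons]
    omega

lemma sumW_ins_le (hgen : ∀ v, Subgroup.closure (X v) = ⊤) {u : V} (g : G u)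
    (l : List (Σ u, G u)) :
    sumW X (ins' Γ G ⟨u, g⟩ l) ≤ wlen (X u) g + sumW X l := by
  rw [ins']
  by_cases hg : (⟨u, g⟩ : Σ u, G u).2 = 1
  · rw [if_pos hg]; exact Nat.le_add_left _ _
  rw [if_neg hg]
  induction l with
  | nil => simp
  | cons t l ih =>
    obtain ⟨x, p⟩ := t
    by_cases hxu : x = u
    · subst hxu
      rw [ins_cons_same g p]
      by_cases hc : g * p = 1
      · rw [if_pos hc]; simp; omega
      · rw [if_neg hc]
        simp only [sumW_cons]
        have := wlen_mul_le (hgen x) g p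
        omega
    · by_cases hadj : Γ.Adj u x
      · rw [ins_cons_adj g ⟨x, p⟩ l hxu hadj]
        simp only [sumW_cons]
        omega
      · rw [ins_cons_blocked g ⟨x, p⟩ l hxu hadj]
        simp only [sumW_cons]
        omega

/-- The normal form function. -/
noncomputable def nf (Γ : SimpleGraph V) (G : V → Type*) [∀ v, Group (G v)]
    (l : List (Σ u, G u)) : List (Σ u, G u) :=
  l.foldr (ins' Γ G) []

@[simp] lemma nf_nil : nf Γ G ([] : List (Σ u, G u)) = [] := rfl

@[simp] lemma nf_cons (s : Σ u, G u) (l : List (Σ u, G u)) :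
    nf Γ G (s :: l) = ins' Γ G s (nf Γ G l) := rfl

lemma red_nf (l : List (Σ u, G u)) : Red Γ G (nf Γ G l) := by
  induction l with
  | nil => exact red_nil
  | cons s l ih => exact red_ins s.2 ih

lemma nf_eqv_of_red {l : List (Σ u, G u)} (hl : Red Γ G l) : eqv Γ G (nf Γ G l) l := by
  induction l with
  | nil => rfl
  | cons s l ih =>
    have htl := ih (red_tail hl)
    rw [nf_cons, ins']
    rw [if_neg (red_head_ne_one hl)]
    have hb : BlockedV Γ s.1 ((nf Γ G l).map Sigma.fst) :=
      blockedV_map_eqv (eqv_symm htl) (red_head_blocked hl)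
    refine eqv_trans ?_ (eqv_cons s htl)
    obtain ⟨u, g⟩ := s
    exact ins_blocked g hb

lemma sumW_nf_of_red {l : List (Σ u, G u)} (hl : Red Γ G l) :
    sumW X (nf Γ G l) = sumW X l :=
  sumW_eqv X (nf_eqv_of_red hl)

end GPAux
-- chunk 7: from the index definition of graphical reducedness to the structural one
namespace GPAux

variable {V : Type*} {Γ : SimpleGraph V} {G : V → Type*} [∀ v, Group (G v)]

lemma GR_tail {s : Σ u, G u} {l : List (Σ u, G u)}
    (h : GraphicallyReduced Γ G (s :: l)) : GraphicallyReduced Γ G l := by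
  constructor
  · intro x hx; exact h.1 x (List.mem_cons_of_mem _ hx)
  · intro i j hi hj hij hvert
    have hi' : i + 1 < (s :: l).length := by simpa using Nat.succ_lt_succ hi
    have hj' : j + 1 < (s :: l).length := by simpa using Nat.succ_lt_succ hj
    obtain ⟨k, hk, h1, h2, h3⟩ := h.2 (i + 1) (j + 1) hi' hj' (by omega) (by simpa using hvert)
    obtain ⟨k', rfl⟩ : ∃ k', k = k' + 1 := ⟨k - 1, by omega⟩
    exact ⟨k', by simpa using hk, by omega, by omega, by simpa using h3⟩

lemma GR_sep : ∀ (w₁ : List (Σ u, G u)) {l : List (Σ u, G u)},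
    GraphicallyReduced Γ G l → ∀ (w₂ w₃ : List (Σ u, G u)) (a b : Σ u, G u),
      l = w₁ ++ a :: (w₂ ++ b :: w₃) → a.1 = b.1 → ∃ c ∈ w₂, ¬ Γ.Adj a.1 c.1 := by
  intro w₁
  induction w₁ with
  | cons t w₁ ih =>
    intro l hl w₂ w₃ a b hdec hab
    subst hdec
    exact ih (GR_tail hl) w₂ w₃ a b rfl hab
  | nil =>
    intro l hl w₂ w₃ a b hdec hab
    subst hdec
    simp only [List.nil_append] at *
    have hlen : (a :: (w₂ ++ b :: w₃)).length = w₂.length + w₃.length + 2 := by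
      simp; omega
    have hj : w₂.length + 1 < (a :: (w₂ ++ b :: w₃)).length := by omega
    have h0 : (0 : ℕ) < (a :: (w₂ ++ b :: w₃)).length := by omega
    have hgetj : (a :: (w₂ ++ b :: w₃)).get ⟨w₂.length + 1, hj⟩ = b := by
      simp only [List.get_eq_getElem, List.getElem_cons_succ]
      rw [List.getElem_append_right (Nat.le_refl _)]
      simp
    have hget0 : (a :: (w₂ ++ b :: w₃)).get ⟨0, h0⟩ = a := rfl
    obtain ⟨k, hk, h1, h2, h3⟩ := hl.2 0 (w₂.length + 1) h0 hj (by omega)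
      (by rw [hget0, hgetj, hab])
    obtain ⟨k', rfl⟩ : ∃ k', k = k' + 1 := ⟨k - 1, by omega⟩
    have hk' : k' < w₂.length := by omega
    have hgetk : (a :: (w₂ ++ b :: w₃)).get ⟨k' + 1, hk⟩ = w₂[k'] := by
      simp only [List.get_eq_getElem, List.getElem_cons_succ]
      exact List.getElem_append_left hk'
    refine ⟨w₂[k'], List.getElem_mem _, ?_⟩
    rw [hget0, hgetk] at h3
    exact h3

lemma not_blockedV {u : V} : ∀ {lv : List V}, ¬ BlockedV Γ u lv →
    ∃ p rest, lv = p ++ u :: rest ∧ ∀ x ∈ p, Γ.Adj u x := by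
  intro lv
  induction lv with
  | nil => intro h; exact absurd trivial h
  | cons v t ih =>
    intro h
    by_cases hv : v = u
    · exact ⟨[], t, by simp [hv], by simp⟩
    · have h' : ¬(Γ.Adj u v → BlockedV Γ u t) := fun hc => h ⟨hv, hc⟩
      push_neg at h'
      obtain ⟨p, rest, hdec, hp⟩ := ih h'.2
      refine ⟨v :: p, rest, by simp [hdec], ?_⟩
      intro x hx
      rcases List.mem_cons.mp hx with rfl | hx
      · exact h'.1
      · exact hp x hx

lemma not_sepV : ∀ {lv : List V}, ¬ SepV Γ lv →
    ∃ w₁ u w₂ w₃, lv = w₁ ++ u :: (w₂ ++ u :: w₃) ∧ ∀ x ∈ w₂, Γ.Adj u x := by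
  intro lv
  induction lv with
  | nil => intro h; exact absurd trivial h
  | cons v t ih =>
    intro h
    by_cases hb : BlockedV Γ v t
    · have hs : ¬ SepV Γ t := fun hc => h ⟨hb, hc⟩
      obtain ⟨w₁, u, w₂, w₃, hdec, hadj⟩ := ih hs
      exact ⟨v :: w₁, u, w₂, w₃, by simp [hdec], hadj⟩
    · obtain ⟨p, rest, hdec, hp⟩ := not_blockedV hb
      exact ⟨[], v, p, rest, by simp [hdec], hp⟩

lemma red_of_GR {l : List (Σ u, G u)} (hl : GraphicallyReduced Γ G l) : Red Γ G l := by
  refine ⟨hl.1, ?_⟩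
  by_contra hsep
  obtain ⟨W₁, u, W₂, W₃, hdec, hadj⟩ := not_sepV hsep
  rw [List.map_eq_append_iff] at hdec
  obtain ⟨l₁, l₂, rfl, hm1, hm2⟩ := hdec
  rw [List.map_eq_cons_iff] at hm2
  obtain ⟨a, l₃, rfl, ha, hm3⟩ := hm2
  rw [List.map_eq_append_iff] at hm3
  obtain ⟨m₂, l₄, rfl, hm4, hm5⟩ := hm3
  rw [List.map_eq_cons_iff] at hm5
  obtain ⟨b, l₅, rfl, hb, _⟩ := hm5
  obtain ⟨c, hc, hnadj⟩ := GR_sep l₁ hl m₂ l₅ a b rfl (by rw [ha, hb])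
  refine hnadj ?_
  rw [ha]
  exact hadj c.1 (by rw [← hm4]; exact List.mem_map_of_mem hc)

end GPAux
-- chunk 8: the action of the graph product on normal forms
namespace GPAux

variable {V : Type*} (Γ : SimpleGraph V) (G : V → Type*) [∀ v, Group (G v)]

/-- Reduced words. -/
def RedWord := {l : List (Σ u, G u) // Red Γ G l}

instance redSetoid : Setoid (RedWord Γ G) where
  r a b := eqv Γ G a.1 b.1
  iseqv := ⟨fun _ => eqv_refl _, eqv_symm, eqv_trans⟩

/-- Reduced words up to swap equivalence. -/
def NFQ := Quotient (redSetoid Γ G)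

noncomputable def insQ (s : Σ u, G u) : NFQ Γ G → NFQ Γ G :=
  Quotient.map (fun p => ⟨ins' Γ G s p.1, red_ins s.2 p.2⟩) (fun _ _ hab => ins'_eqv s hab)

noncomputable def phi (u : V) : G u →* Function.End (NFQ Γ G) where
  toFun g := insQ Γ G ⟨u, g⟩
  map_one' := by
    funext q
    induction q using Quotient.ind with
    | _ p =>
      refine Quotient.sound ?_
      show eqv Γ G (ins' Γ G ⟨u, 1⟩ p.1) p.1
      rw [ins', if_pos rfl]
  map_mul' g h := by
    funext q
    induction q using Quotient.ind with
    | _ p =>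
      refine Quotient.sound ?_
      show eqv Γ G (ins' Γ G ⟨u, g * h⟩ p.1) (ins' Γ G ⟨u, g⟩ (ins' Γ G ⟨u, h⟩ p.1))
      exact eqv_symm (ins'_mul g h p.2)

noncomputable def psi : CoprodI G →* Equiv.Perm (NFQ Γ G) :=
  CoprodI.lift (fun u => (phi Γ G u).toHomPerm)

lemma psi_of {u : V} (g : G u) (q : NFQ Γ G) :
    psi Γ G (CoprodI.of g) q = insQ Γ G ⟨u, g⟩ q := by
  rw [psi, CoprodI.lift_of]
  rfl

lemma rels_ker : graphProductRels Γ G ⊆ ((psi Γ G).ker : Set (CoprodI G)) := by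
  rintro x ⟨u, v, g, h, hadj, rfl⟩
  have hcomm : psi Γ G (CoprodI.of g) * psi Γ G (CoprodI.of h) =
      psi Γ G (CoprodI.of h) * psi Γ G (CoprodI.of g) := by
    refine Equiv.ext fun q => ?_
    induction q using Quotient.ind with
    | _ p =>
      refine ((psi_of Γ G g _).trans (congrArg _ (psi_of Γ G h ⟦p⟧))).trans
        (Eq.trans ?_ ((psi_of Γ G h _).trans (congrArg _ (psi_of Γ G g ⟦p⟧))).symm)
      refine Quotient.sound ?_
      show eqv Γ G (ins' Γ G ⟨u, g⟩ (ins' Γ G ⟨v, h⟩ p.1)) (ins' Γ G ⟨v, h⟩ (ins' Γ G ⟨u, g⟩ p.1))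
      exact ins'_comm_adj hadj g h p.1
  have := commutatorElement_eq_one_iff_mul_comm.mpr hcomm
  simp only [SetLike.mem_coe, MonoidHom.mem_ker, map_mul, map_inv]
  simpa [commutatorElement_def] using this

noncomputable def PhiGP : GraphProduct Γ G →* Equiv.Perm (NFQ Γ G) :=
  QuotientGroup.lift _ (psi Γ G) (Subgroup.normalClosure_le_normal (rels_ker Γ G))

lemma PhiGP_of {u : V} (g : G u) (q : NFQ Γ G) :
    PhiGP Γ G (GraphProduct.of Γ G g) q = insQ Γ G ⟨u, g⟩ q := by
  have h1 : GraphProduct.of Γ G g =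
      QuotientGroup.mk' (Subgroup.normalClosure (graphProductRels Γ G)) (CoprodI.of g) := rfl
  rw [h1]
  show psi Γ G (CoprodI.of g) q = _
  exact psi_of Γ G g q

def emptyQ : NFQ Γ G := ⟦⟨[], red_nil⟩⟧

lemma wordProd_nil : wordProd Γ G [] = 1 := by simp [wordProd]

lemma wordProd_cons (s : Σ u, G u) (l : List (Σ u, G u)) :
    wordProd Γ G (s :: l) = GraphProduct.of Γ G s.2 * wordProd Γ G l := by
  simp [wordProd]

lemma PhiGP_wordProd (l : List (Σ u, G u)) :
    PhiGP Γ G (wordProd Γ G l) (emptyQ Γ G) = ⟦⟨nf Γ G l, red_nf l⟩⟧ := by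
  induction l with
  | nil =>
    rw [wordProd_nil, map_one]
    rfl
  | cons s l ih =>
    rw [wordProd_cons, map_mul, Equiv.Perm.mul_apply, ih]
    obtain ⟨u, g⟩ := s
    refine (PhiGP_of Γ G g _).trans ?_
    rfl

variable (X : ∀ v, Set (G v))

noncomputable def lenQ : NFQ Γ G → ℕ :=
  Quotient.lift (fun p : RedWord Γ G => sumW X p.1) (fun _ _ hab => sumW_eqv X hab)

end GPAux
-- chunk 9: assembly
namespace GPAux

variable {V : Type*} {Γ : SimpleGraph V} {G : V → Type*} [∀ v, Group (G v)]
variable {X : ∀ v, Set (G v)}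

lemma exists_gen_list (hgen : ∀ v, Subgroup.closure (X v) = ⊤) (l : List (Σ u, G u)) :
    ∃ L : List (GraphProduct Γ G), (∀ x ∈ L, x ∈ genSet Γ G X ∨ x⁻¹ ∈ genSet Γ G X) ∧
      L.prod = wordProd Γ G l ∧ L.length = sumW X l := by
  induction l with
  | nil => exact ⟨[], by simp, by simp [wordProd_nil], by simp⟩
  | cons s l ih =>
    obtain ⟨L, hL, hLp, hLl⟩ := ih
    obtain ⟨ls, h1, h2, h3⟩ := wlen_spec (hgen s.1) s.2
    refine ⟨ls.map (GraphProduct.of Γ G) ++ L, ?_, ?_, ?_⟩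
    · intro x hx
      rcases List.mem_append.mp hx with hx | hx
      · obtain ⟨y, hy, rfl⟩ := List.mem_map.mp hx
        rcases h1 y hy with h | h
        · exact Or.inl (Set.mem_iUnion.mpr ⟨s.1, Set.mem_image_of_mem _ h⟩)
        · refine Or.inr ?_
          rw [← map_inv]
          exact Set.mem_iUnion.mpr ⟨s.1, Set.mem_image_of_mem _ h⟩
      · exact hL x hx
    · rw [List.prod_append, wordProd_cons, hLp, ← h2]
      rw [← map_list_prod]
    · simp [hLl, h3]

lemma lenQ_act_le (hgen : ∀ v, Subgroup.closure (X v) = ⊤) (x : GraphProduct Γ G)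
    (hx : x ∈ genSet Γ G X ∨ x⁻¹ ∈ genSet Γ G X) (q : NFQ Γ G) :
    lenQ Γ G X (PhiGP Γ G x q) ≤ 1 + lenQ Γ G X q := by
  have hex : ∃ (u : V) (z : G u), x = GraphProduct.of Γ G z ∧ wlen (X u) z ≤ 1 := by
    rcases hx with hx | hx
    · simp only [genSet, Set.mem_iUnion, Set.mem_image] at hx
      obtain ⟨u, y, hy, rfl⟩ := hx
      exact ⟨u, y, rfl, wlen_gen_le (Or.inl hy)⟩
    · simp only [genSet, Set.mem_iUnion, Set.mem_image] at hx
      obtain ⟨u, y, hy, hxy⟩ := hx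
      refine ⟨u, y⁻¹, ?_, wlen_gen_le (Or.inr (by simpa using hy))⟩
      rw [map_inv, hxy, inv_inv]
  obtain ⟨u, z, rfl, hz⟩ := hex
  induction q using Quotient.ind with
  | _ p =>
    refine (congrArg (lenQ Γ G X) (PhiGP_of Γ G z _)).trans_le ?_
    show sumW X (ins' Γ G ⟨u, z⟩ p.1) ≤ 1 + sumW X p.1
    have := sumW_ins_le (Γ := Γ) X hgen z p.1
    omega

lemma lenQ_prod_le (hgen : ∀ v, Subgroup.closure (X v) = ⊤)
    (L : List (GraphProduct Γ G))
    (hL : ∀ x ∈ L, x ∈ genSet Γ G X ∨ x⁻¹ ∈ genSet Γ G X) :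
    lenQ Γ G X (PhiGP Γ G L.prod (emptyQ Γ G)) ≤ L.length := by
  induction L with
  | nil =>
    rw [List.prod_nil, map_one]
    exact Nat.le_refl 0
  | cons x L ih =>
    rw [List.prod_cons, map_mul, Equiv.Perm.mul_apply]
    have h1 := lenQ_act_le hgen x (hL x (List.mem_cons_self))
      (PhiGP Γ G L.prod (emptyQ Γ G))
    have h2 := ih fun y hy => hL y (List.mem_cons_of_mem _ hy)
    simp only [List.length_cons]
    omega

theorem main {V : Type*} [Fintype V] (Γ : SimpleGraph V)
    (G : V → Type*) [∀ v, Group (G v)] [∀ v, Nontrivial (G v)]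
    (X : ∀ v, Set (G v)) (hfin : ∀ v, (X v).Finite)
    (hgen : ∀ v, Subgroup.closure (X v) = ⊤)
    (l : List (Σ u, G u)) (hl : GraphicallyReduced Γ G l) :
    wlen (genSet Γ G X) (wordProd Γ G l) = (l.map fun s => wlen (X s.1) s.2).sum := by
  have hred : Red Γ G l := red_of_GR hl
  show wlen (genSet Γ G X) (wordProd Γ G l) = sumW X l
  obtain ⟨L0, hL0v, hL0p, hL0l⟩ := exists_gen_list (Γ := Γ) hgen l
  apply le_antisymm
  · rw [← hL0l]
    exact wlen_le hL0v hL0p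
  · have hne : {n | ∃ L : List (GraphProduct Γ G),
        (∀ x ∈ L, x ∈ genSet Γ G X ∨ x⁻¹ ∈ genSet Γ G X) ∧
        L.prod = wordProd Γ G l ∧ L.length = n}.Nonempty :=
      ⟨L0.length, L0, hL0v, hL0p, rfl⟩
    obtain ⟨L, hLv, hLp, hLl⟩ := Nat.sInf_mem hne
    have hkey : sumW X l = lenQ Γ G X (PhiGP Γ G (wordProd Γ G l) (emptyQ Γ G)) := by
      rw [PhiGP_wordProd]
      show sumW X l = sumW X (nf Γ G l)
      exact (sumW_nf_of_red X hred).symm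
    calc sumW X l = lenQ Γ G X (PhiGP Γ G (wordProd Γ G l) (emptyQ Γ G)) := hkey
      _ = lenQ Γ G X (PhiGP Γ G L.prod (emptyQ Γ G)) := by rw [hLp]
      _ ≤ L.length := lenQ_prod_le hgen L hLv
      _ = _ := hLl

end GPAux

/-- In a graph product of finitely generated groups, the word length of a graphically
reduced word with respect to the union of the vertex generating sets equals the sum of the
word lengths of its syllables in their vertex groups. -/
theorem wordLength_of_graphically_reduced {V : Type*} [Fintype V] (Γ : SimpleGraph V)
    (G : V → Type*) [∀ v, Group (G v)] [∀ v, Nontrivial (G v)]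
    (X : ∀ v, Set (G v)) (hfin : ∀ v, (X v).Finite)
    (hgen : ∀ v, Subgroup.closure (X v) = ⊤)
    (l : List (Σ u, G u)) (hl : GraphicallyReduced Γ G l) :
    wlen (genSet Γ G X) (wordProd Γ G l) = (l.map fun s => wlen (X s.1) s.2).sum :=
  GPAux.main Γ G X hfin hgen l hl
end

section
/- Let Γ be a finite simplicial graph and 𝒢 a collection of nontrivial finitely generated groups indexed by V(Γ), each G_u with finite generating set X_u. If Λ ⊂ Γ is an induced subgraph, then the subgroup ⟨Λ⟩ of the graph product Γ𝒢 generated by the vertex-groups labelling vertices of Λ is isometrically embedded: for every element g ∈ ⟨Λ⟩, the word length of g in Γ𝒢 with respect to ⋃_{u∈V(Γ)} X_u equals the word length of g in ⟨Λ⟩ ≅ Λℋ with respect to ⋃_{u∈V(Λ)} X_u. -/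
open Monoid

section Aux

open scoped Classical

variable {V : Type*} (Γ : SimpleGraph V) (G : V → Type*) [∀ v, Group (G v)]

theorem GraphProduct.mk_of {u : V} (g : G u) :
    (QuotientGroup.mk' (Subgroup.normalClosure (graphProductRels Γ G))) (CoprodI.of g) =
      GraphProduct.of Γ G g := rfl

theorem GraphProduct.of_comm {u v : V} (hadj : Γ.Adj u v) (g : G u) (h' : G v) :
    GraphProduct.of Γ G g * GraphProduct.of Γ G h' *
      (GraphProduct.of Γ G g)⁻¹ * (GraphProduct.of Γ G h')⁻¹ = 1 := by
  have h1 : ((QuotientGroup.mk' (Subgroup.normalClosure (graphProductRels Γ G)))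
      (CoprodI.of g * CoprodI.of h' * (CoprodI.of g)⁻¹ * (CoprodI.of h')⁻¹)) = 1 := by
    rw [← MonoidHom.mem_ker, QuotientGroup.ker_mk']
    exact Subgroup.subset_normalClosure ⟨u, v, g, h', hadj, rfl⟩
  simp only [map_mul, map_inv, GraphProduct.mk_of] at h1
  exact h1

/-- The retraction from the graph product to the graph product over an induced subgraph. -/
noncomputable def retr (S : Set V) :
    GraphProduct Γ G →* GraphProduct (Γ.induce S) (fun u : S => G u) :=
  QuotientGroup.lift _
    (CoprodI.lift (fun v => if h : v ∈ S then
        (GraphProduct.of (Γ.induce S) (fun u : S => G u) (u := ⟨v, h⟩)) else 1))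
    (by
      refine Subgroup.normalClosure_le_normal ?_
      rintro x ⟨u, v, g, h', hadj, rfl⟩
      simp only [SetLike.mem_coe, MonoidHom.mem_ker, map_mul, map_inv, CoprodI.lift_of]
      by_cases hu : u ∈ S
      · by_cases hv : v ∈ S
        · rw [dif_pos hu, dif_pos hv]
          exact GraphProduct.of_comm (Γ.induce S) (fun u : S => G u)
            (u := ⟨u, hu⟩) (v := ⟨v, hv⟩) hadj g h'
        · rw [dif_neg hv]
          simp
      · rw [dif_neg hu]
        simp)

theorem retr_of_mem {S : Set V} {v : V} (hv : v ∈ S) (g : G v) :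
    retr Γ G S (GraphProduct.of Γ G g)
      = GraphProduct.of (Γ.induce S) (fun u : S => G u) (u := ⟨v, hv⟩) g := by
  have h1 : retr Γ G S (GraphProduct.of Γ G g) = CoprodI.lift (fun v => if h : v ∈ S then
      (GraphProduct.of (Γ.induce S) (fun u : S => G u) (u := ⟨v, h⟩)) else 1)
      (CoprodI.of g) := rfl
  rw [h1, CoprodI.lift_of, dif_pos hv]

theorem retr_of_not_mem {S : Set V} {v : V} (hv : v ∉ S) (g : G v) :
    retr Γ G S (GraphProduct.of Γ G g) = 1 := by
  have h1 : retr Γ G S (GraphProduct.of Γ G g) = CoprodI.lift (fun v => if h : v ∈ S then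
      (GraphProduct.of (Γ.induce S) (fun u : S => G u) (u := ⟨v, h⟩)) else 1)
      (CoprodI.of g) := rfl
  rw [h1, CoprodI.lift_of, dif_neg hv]
  rfl

theorem genSet_closure_eq_top (X : ∀ v, Set (G v)) (hgen : ∀ v, Subgroup.closure (X v) = ⊤) :
    Subgroup.closure (genSet Γ G X) = ⊤ := by
  rw [eq_top_iff]
  intro x hx
  clear hx
  obtain ⟨y, rfl⟩ := QuotientGroup.mk'_surjective _ x
  induction y using CoprodI.induction_on with
  | one => rw [map_one]; exact Subgroup.one_mem _
  | of i m =>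
    have hm : m ∈ Subgroup.closure (X i) := by rw [hgen]; trivial
    have h1 : GraphProduct.of Γ G m ∈ (Subgroup.closure (X i)).map (GraphProduct.of Γ G) :=
      ⟨m, hm, rfl⟩
    rw [MonoidHom.map_closure] at h1
    rw [GraphProduct.mk_of]
    exact Subgroup.closure_mono (Set.subset_iUnion
      (fun u : V => (GraphProduct.of Γ G (u := u)) '' X u) i) h1
  | mul a b ha hb => rw [map_mul]; exact Subgroup.mul_mem _ ha hb

theorem exists_word {H : Type*} [Group H] {S : Set H} (hS : Subgroup.closure S = ⊤) (g : H) :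
    ∃ l : List H, (∀ x ∈ l, x ∈ S ∨ x⁻¹ ∈ S) ∧ l.prod = g := by
  have hg : g ∈ Submonoid.closure (S ∪ S⁻¹) := by
    rw [← Subgroup.closure_toSubmonoid, hS]; trivial
  obtain ⟨l, hl, rfl⟩ := Submonoid.exists_list_of_mem_closure hg
  refine ⟨l, fun x hx => ?_, rfl⟩
  rcases hl x hx with h | h
  · exact Or.inl h
  · exact Or.inr h

theorem prod_filter_ne_one' {H : Type*} [Group H] (l : List H) :
    (l.filter (fun x => x ≠ 1)).prod = l.prod := by
  induction l with
  | nil => rfl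
  | cons a l ih =>
    rcases eq_or_ne a 1 with ha | ha
    · rw [List.filter_cons_of_neg, List.prod_cons, ih, ha, one_mul]
      simp [ha]
    · rw [List.filter_cons_of_pos, List.prod_cons, ih, List.prod_cons]
      simp [ha]

end Aux

/-- The subgroup of a graph product generated by the vertex groups of an induced subgraph,
identified with the graph product over the induced subgraph via the canonical homomorphism,
is isometrically embedded: word lengths agree. -/
theorem induced_subgraph_isometrically_embedded {V : Type*} [Fintype V] (Γ : SimpleGraph V)
    (G : V → Type*) [∀ v, Group (G v)] [∀ v, Nontrivial (G v)]
    (X : ∀ v, Set (G v)) (hfin : ∀ v, (X v).Finite)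
    (hgen : ∀ v, Subgroup.closure (X v) = ⊤) (S : Set V)
    (φ : GraphProduct (Γ.induce S) (fun u : S => G u) →* GraphProduct Γ G)
    (hφ : ∀ (u : S) (g : G u),
      φ (GraphProduct.of (Γ.induce S) (fun u : S => G u) g) = GraphProduct.of Γ G g)
    (h : GraphProduct (Γ.induce S) (fun u : S => G u)) :
    wlen (genSet Γ G X) (φ h)
      = wlen (genSet (Γ.induce S) (fun u : S => G u) (fun u : S => X u)) h := by
    classical
  have hφgen : ∀ y ∈ genSet (Γ.induce S) (fun u : S => G u) (fun u : S => X u),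
      φ y ∈ genSet Γ G X := by
    rintro y hy
    obtain ⟨_, ⟨u, rfl⟩, g, hg, rfl⟩ := hy
    rw [hφ]
    exact Set.mem_iUnion.2 ⟨u.1, g, hg, rfl⟩
  have hretrφ : ∀ x, retr Γ G S (φ x) = x := by
    have key : ((retr Γ G S).comp φ).comp
        (QuotientGroup.mk' (Subgroup.normalClosure
          (graphProductRels (Γ.induce S) (fun u : S => G u))))
        = QuotientGroup.mk' _ := by
      apply CoprodI.ext_hom
      intro i
      ext g
      simp only [MonoidHom.comp_apply]
      show retr Γ G S (φ (GraphProduct.of (Γ.induce S) (fun u : S => G ↑u) (u := i) g)) =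
        GraphProduct.of (Γ.induce S) (fun u : S => G ↑u) (u := i) g
      rw [hφ, retr_of_mem Γ G i.2]
    intro x
    obtain ⟨y, rfl⟩ := QuotientGroup.mk'_surjective _ x
    exact DFunLike.congr_fun key y
  -- the set of word lengths on the subgraph side is nonempty
  obtain ⟨l₁, hl₁, hprod₁⟩ := exists_word
    (genSet_closure_eq_top (Γ.induce S) (fun u : S => G u) (fun u : S => X u)
      (fun u => hgen u.1)) h
  have hne : {n | ∃ l : List (GraphProduct (Γ.induce S) (fun u : S => G u)),
      (∀ x ∈ l, x ∈ genSet (Γ.induce S) (fun u : S => G u) (fun u : S => X u) ∨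
        x⁻¹ ∈ genSet (Γ.induce S) (fun u : S => G u) (fun u : S => X u)) ∧
      l.prod = h ∧ l.length = n}.Nonempty := ⟨l₁.length, l₁, hl₁, hprod₁, rfl⟩
  -- pushing forward a word via φ
  have push : ∀ l : List (GraphProduct (Γ.induce S) (fun u : S => G u)),
      (∀ x ∈ l, x ∈ genSet (Γ.induce S) (fun u : S => G u) (fun u : S => X u) ∨
        x⁻¹ ∈ genSet (Γ.induce S) (fun u : S => G u) (fun u : S => X u)) → l.prod = h →
      (l.map φ).length ∈ {n | ∃ l' : List (GraphProduct Γ G),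
        (∀ x ∈ l', x ∈ genSet Γ G X ∨ x⁻¹ ∈ genSet Γ G X) ∧
        l'.prod = φ h ∧ l'.length = n} := by
    intro l hl hprod
    refine ⟨l.map φ, ?_, ?_, rfl⟩
    · intro x hx
      obtain ⟨y, hy, rfl⟩ := List.mem_map.1 hx
      rcases hl y hy with h' | h'
      · exact Or.inl (hφgen y h')
      · refine Or.inr ?_
        rw [← map_inv]
        exact hφgen y⁻¹ h'
    · rw [← hprod, ← map_list_prod]
  apply le_antisymm
  · -- wlen Γ (φ h) ≤ wlen induce h
    obtain ⟨l₀, hl₀, hprod₀, hlen₀⟩ := Nat.sInf_mem hne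
    have := push l₀ hl₀ hprod₀
    calc wlen (genSet Γ G X) (φ h) ≤ (l₀.map φ).length := Nat.sInf_le this
      _ = l₀.length := List.length_map _
      _ = _ := hlen₀
  · -- wlen induce h ≤ wlen Γ (φ h)
    have hne' : {n | ∃ l' : List (GraphProduct Γ G),
        (∀ x ∈ l', x ∈ genSet Γ G X ∨ x⁻¹ ∈ genSet Γ G X) ∧
        l'.prod = φ h ∧ l'.length = n}.Nonempty :=
      ⟨_, push l₁ hl₁ hprod₁⟩
    obtain ⟨l, hl, hprod, hlen⟩ := Nat.sInf_mem hne'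
    set l₂ := (l.map (retr Γ G S)).filter (fun x => x ≠ 1) with hl₂def
    have hmem₂ : ∀ x ∈ l₂, x ∈ genSet (Γ.induce S) (fun u : S => G u) (fun u : S => X u) ∨
        x⁻¹ ∈ genSet (Γ.induce S) (fun u : S => G u) (fun u : S => X u) := by
      intro x hx
      rw [hl₂def, List.mem_filter] at hx
      obtain ⟨hx1, hx2⟩ := hx
      have hxne : x ≠ 1 := by simpa using hx2
      obtain ⟨y, hy, rfl⟩ := List.mem_map.1 hx1
      rcases hl y hy with h' | h'
      · obtain ⟨_, ⟨u, rfl⟩, g, hg, rfl⟩ := h'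
        by_cases hu : u ∈ S
        · rw [retr_of_mem Γ G hu]
          exact Or.inl (Set.mem_iUnion.2 ⟨⟨u, hu⟩, g, hg, rfl⟩)
        · exact absurd (retr_of_not_mem Γ G hu g) hxne
      · obtain ⟨_, ⟨u, rfl⟩, g, hg, hgeq⟩ := h'
        by_cases hu : u ∈ S
        · refine Or.inr ?_
          rw [← map_inv, ← hgeq, retr_of_mem Γ G hu]
          exact Set.mem_iUnion.2 ⟨⟨u, hu⟩, g, hg, rfl⟩
        · refine absurd ?_ hxne
          have : retr Γ G S y⁻¹ = 1 := by rw [← hgeq]; exact retr_of_not_mem Γ G hu g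
          rw [map_inv] at this
          rw [← inv_inv (retr Γ G S y), this, inv_one]
    have hprod₂ : l₂.prod = h := by
      rw [hl₂def, prod_filter_ne_one', ← map_list_prod, hprod, hretrφ]
    calc wlen (genSet (Γ.induce S) (fun u : S => G u) (fun u : S => X u)) h
        ≤ l₂.length := Nat.sInf_le ⟨l₂, hmem₂, hprod₂, rfl⟩
      _ ≤ (l.map (retr Γ G S)).length := List.length_filter_le _ _
      _ = l.length := List.length_map _
      _ = _ := hlen
end

section
/- Let Γ be a simplicial graph and 𝒢 a collection of nontrivial groups indexed by V(Γ). Every element a of the graph product Γ𝒢 is conjugate to an element represented by a graphically cyclically reduced word; i.e., there exist b, g ∈ Γ𝒢 with a = g b g⁻¹ and b graphically cyclically reduced. -/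
open Monoid

section Helpers
variable {V : Type*} (Γ : SimpleGraph V) (G : V → Type*) [∀ v, Group (G v)]

lemma gp_of_comm {u v : V} (h : Γ.Adj u v) (g : G u) (k : G v) :
    GraphProduct.of Γ G g * GraphProduct.of Γ G k
      = GraphProduct.of Γ G k * GraphProduct.of Γ G g := by
  show QuotientGroup.mk' _ (CoprodI.of g) * QuotientGroup.mk' _ (CoprodI.of k)
      = QuotientGroup.mk' _ (CoprodI.of k) * QuotientGroup.mk' _ (CoprodI.of g)
  show QuotientGroup.mk' _ (CoprodI.of g * CoprodI.of k) = QuotientGroup.mk' _ (CoprodI.of k * CoprodI.of g)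
  refine (QuotientGroup.eq (a := _) (b := _)).2 ?_
  apply Subgroup.subset_normalClosure
  refine ⟨v, u, k⁻¹, g⁻¹, h.symm, ?_⟩
  simp only [map_inv]
  group

lemma wordProd_nil : wordProd Γ G [] = 1 := rfl

lemma wordProd_cons (s : Σ u, G u) (l : List (Σ u, G u)) :
    wordProd Γ G (s :: l) = GraphProduct.of Γ G s.2 * wordProd Γ G l := by
  simp [wordProd]

lemma wordProd_append (l₁ l₂ : List (Σ u, G u)) :
    wordProd Γ G (l₁ ++ l₂) = wordProd Γ G l₁ * wordProd Γ G l₂ := by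
  simp [wordProd]

lemma gp_of_comm_wordProd {u : V} (g : G u) (m : List (Σ u, G u)) (h : ∀ t ∈ m, Γ.Adj u t.1) :
    GraphProduct.of Γ G g * wordProd Γ G m = wordProd Γ G m * GraphProduct.of Γ G g := by
  induction m with
  | nil => simp [wordProd]
  | cons t m ih =>
    rw [wordProd_cons, ← mul_assoc, gp_of_comm Γ G (h t (.head _)), mul_assoc,
      ih (fun t ht => h t (.tail _ ht)), mul_assoc]

lemma gp_of_cast {u v : V} (h : u = v) (g : G u) :
    GraphProduct.of Γ G (h ▸ g : G v) = GraphProduct.of Γ G g := by subst h; rfl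

lemma exists_word_s6 (a : GraphProduct Γ G) : ∃ l, a = wordProd Γ G l := by
  obtain ⟨x, rfl⟩ := QuotientGroup.mk'_surjective (Subgroup.normalClosure (graphProductRels Γ G)) a
  induction x using Monoid.CoprodI.induction_on with
  | one => exact ⟨[], by simp [wordProd]; rfl⟩
  | of i m => exact ⟨[⟨i, m⟩], by simp [wordProd]; rfl⟩
  | mul x y hx hy =>
    obtain ⟨l₁, hl₁⟩ := hx
    obtain ⟨l₂, hl₂⟩ := hy
    exact ⟨l₁ ++ l₂, by rw [wordProd_append, ← hl₁, ← hl₂, map_mul]; rfl⟩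

lemma split_two {α : Type*} {i j : ℕ} {l : List α} (hi : i < l.length) (hj : j < l.length)
    (hij : i < j) :
    l = l.take i ++ l[i] :: ((l.drop (i+1)).take (j - (i+1)) ++ l[j] :: l.drop (j+1)) := by
  conv_lhs => rw [← List.take_append_drop i l, List.drop_eq_getElem_cons hi,
    ← List.take_append_drop (j - (i+1)) (l.drop (i+1))]
  rw [List.drop_drop]
  have h1 : i + 1 + (j - (i+1)) = j := by omega
  rw [h1, List.drop_eq_getElem_cons hj]

lemma mem_take_get {α : Type*} {l : List α} {n : ℕ} {t : α} (ht : t ∈ l.take n) :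
    ∃ (k : ℕ) (hk : k < l.length), k < n ∧ l[k] = t := by
  obtain ⟨k, hk, hkt⟩ := List.mem_iff_getElem.1 ht
  have h1 : k < min n l.length := by simpa using hk
  exact ⟨k, lt_of_lt_of_le h1 (min_le_right _ _), lt_of_lt_of_le h1 (min_le_left _ _),
    by rw [← hkt]; exact List.getElem_take.symm⟩

lemma mem_drop_get {α : Type*} {l : List α} {n : ℕ} {t : α} (ht : t ∈ l.drop n) :
    ∃ (k : ℕ) (hk : k < l.length), n ≤ k ∧ l[k] = t := by
  obtain ⟨k, hk, hkt⟩ := List.mem_iff_getElem.1 ht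
  have h1 : k < l.length - n := by simpa using hk
  exact ⟨n + k, by omega, by omega, by rw [← hkt]; exact List.getElem_drop.symm⟩

lemma merge_calc {H : Type*} [Group H] (P M S a b : H) (cm : a * M = M * a) :
    P * (a * (M * (b * S))) = P * M * (a * b * S) := by
  rw [← mul_assoc a M, cm]
  simp [mul_assoc]

lemma conj_calc {H : Type*} [Group H] (P M S a b : H) (c1 : a * P = P * a) (c2 : b * S = S * b) :
    P * (a * (M * (b * S))) = a * (P * M * S * (b * a)) * a⁻¹ := by
  have h : a * (P * M * S * (b * a)) * a⁻¹ = (a * P) * (M * (S * b)) := by group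
  rw [h, c1, c2, mul_assoc]

lemma key (n : ℕ) : ∀ (l : List (Σ u, G u)), l.length ≤ n →
    ∃ (g : GraphProduct Γ G) (l' : List (Σ u, G u)),
      GraphCyclicallyReduced Γ G l' ∧ wordProd Γ G l = g * wordProd Γ G l' * g⁻¹ := by
  induction n with
  | zero =>
    intro l hl
    obtain rfl : l = [] := List.length_eq_zero_iff.1 (Nat.le_zero.1 hl)
    refine ⟨1, [], ⟨⟨by simp, by intro i j hi; simp at hi⟩, ?_⟩, by simp⟩
    rintro ⟨i, j, hi, -⟩
    simp at hi
  | succ n ih =>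
    intro l hl
    by_cases htriv : ∃ s ∈ l, s.2 = (1 : G s.1)
    · obtain ⟨s, hs, hs1⟩ := htriv
      obtain ⟨w₁, w₂, rfl⟩ := List.append_of_mem hs
      have hlen : (w₁ ++ w₂).length ≤ n := by
        simp only [List.length_append, List.length_cons] at hl ⊢; omega
      obtain ⟨g, l', hred, heq⟩ := ih (w₁ ++ w₂) hlen
      refine ⟨g, l', hred, ?_⟩
      rw [wordProd_append, wordProd_cons, hs1, map_one, one_mul, ← wordProd_append, heq]
    · push_neg at htriv
      by_cases hsep : ∃ (i j : ℕ) (hi : i < l.length) (hj : j < l.length), i < j ∧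
          (l.get ⟨i, hi⟩).1 = (l.get ⟨j, hj⟩).1 ∧
          ∀ (k : ℕ) (hk : k < l.length), i < k → k < j →
            Γ.Adj (l.get ⟨i, hi⟩).1 (l.get ⟨k, hk⟩).1
      · -- merge case: two mergeable syllables exist
        obtain ⟨i, j, hi, hj, hij, heq, hadj⟩ := hsep
        simp only [List.get_eq_getElem] at heq hadj
        have hsplit := split_two hi hj hij
        have hmid : ∀ t ∈ (l.drop (i+1)).take (j - (i+1)), Γ.Adj (l[i]).1 t.1 := by
          intro t ht
          obtain ⟨k', hk', hlt, rfl⟩ := mem_take_get ht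
          rw [List.getElem_drop]
          have hk2 : i + 1 + k' < l.length := by
            simp only [List.length_drop] at hk'; omega
          exact hadj (i+1+k') hk2 (by omega) (by omega)
        let s' : Σ u, G u := ⟨(l[i]'hi).1, (l[i]'hi).2 * (heq.symm ▸ (l[j]'hj).2)⟩
        have hob : GraphProduct.of Γ G s'.2
            = GraphProduct.of Γ G (l[i]).2 * GraphProduct.of Γ G (l[j]).2 := by
          show GraphProduct.of Γ G ((l[i]'hi).2 * (heq.symm ▸ (l[j]'hj).2)) = _
          rw [map_mul, gp_of_cast]
        have hcm := gp_of_comm_wordProd Γ G (l[i]).2 ((l.drop (i+1)).take (j - (i+1))) hmid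
        have hw : wordProd Γ G l
            = wordProd Γ G (l.take i ++ (l.drop (i+1)).take (j - (i+1)) ++ s' :: l.drop (j+1)) := by
          conv_lhs => rw [hsplit]
          simp only [wordProd_append, wordProd_cons]
          rw [hob]
          exact merge_calc _ _ _ _ _ hcm
        have hlen : (l.take i ++ (l.drop (i+1)).take (j - (i+1)) ++ s' :: l.drop (j+1)).length
            ≤ n := by
          have hc := congrArg List.length hsplit
          simp only [List.length_append, List.length_cons, List.length_nil] at hc ⊢
          omega
        obtain ⟨g, l', hr, he⟩ := ih _ hlen
        exact ⟨g, l', hr, by rw [hw, he]⟩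
      · push_neg at hsep
        have hred : GraphicallyReduced Γ G l := ⟨htriv, fun i j hi hj hij he => hsep i j hi hj hij he⟩
        by_cases hcyc : ∃ (i j : ℕ) (hi : i < l.length) (hj : j < l.length), i < j ∧
            (l.get ⟨i, hi⟩).1 = (l.get ⟨j, hj⟩).1 ∧
            (∀ (k : ℕ) (hk : k < l.length), k < i →
              Γ.Adj (l.get ⟨i, hi⟩).1 (l.get ⟨k, hk⟩).1) ∧
            (∀ (k : ℕ) (hk : k < l.length), j < k →
              Γ.Adj (l.get ⟨j, hj⟩).1 (l.get ⟨k, hk⟩).1)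
        · -- conjugation case: cyclically reduce
          obtain ⟨i, j, hi, hj, hij, heq, hpre0, hsuf0⟩ := hcyc
          simp only [List.get_eq_getElem] at heq hpre0 hsuf0
          have hsplit := split_two hi hj hij
          have hpre' : ∀ t ∈ l.take i, Γ.Adj (l[i]).1 t.1 := by
            intro t ht
            obtain ⟨k, hk, hlt, rfl⟩ := mem_take_get ht
            exact hpre0 k hk hlt
          have hsuf' : ∀ t ∈ l.drop (j+1), Γ.Adj (l[j]).1 t.1 := by
            intro t ht
            obtain ⟨k, hk, hge, rfl⟩ := mem_drop_get ht
            exact hsuf0 k hk (by omega)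
          let s' : Σ u, G u := ⟨(l[i]'hi).1, (heq.symm ▸ (l[j]'hj).2) * (l[i]'hi).2⟩
          have hob : GraphProduct.of Γ G s'.2
              = GraphProduct.of Γ G (l[j]).2 * GraphProduct.of Γ G (l[i]).2 := by
            show GraphProduct.of Γ G ((heq.symm ▸ (l[j]'hj).2) * (l[i]'hi).2) = _
            rw [map_mul, gp_of_cast]
          have c1 := gp_of_comm_wordProd Γ G (l[i]).2 (l.take i) hpre'
          have c2 := gp_of_comm_wordProd Γ G (l[j]).2 (l.drop (j+1)) hsuf'
          have hw : wordProd Γ G l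
              = GraphProduct.of Γ G (l[i]).2 *
                wordProd Γ G ((l.take i ++ (l.drop (i+1)).take (j - (i+1)) ++ l.drop (j+1))
                  ++ [s']) * (GraphProduct.of Γ G (l[i]).2)⁻¹ := by
            conv_lhs => rw [hsplit]
            simp only [wordProd_append, wordProd_cons, wordProd_nil, mul_one]
            rw [hob]
            exact conj_calc _ _ _ _ _ c1 c2
          have hlen : ((l.take i ++ (l.drop (i+1)).take (j - (i+1)) ++ l.drop (j+1))
              ++ [s']).length ≤ n := by
            have hc := congrArg List.length hsplit
            simp only [List.length_append, List.length_cons, List.length_nil] at hc ⊢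
            omega
          obtain ⟨g, l', hr, he⟩ := ih _ hlen
          refine ⟨GraphProduct.of Γ G (l[i]).2 * g, l', hr, ?_⟩
          rw [hw, he]
          group
        · exact ⟨1, l, ⟨hred, hcyc⟩, by simp⟩

end Helpers

/-- Every element of a graph product is conjugate to an element represented by a
graphically cyclically reduced word. -/
theorem conjugate_to_graphically_cyclically_reduced {V : Type*} (Γ : SimpleGraph V)
    (G : V → Type*) [∀ v, Group (G v)] [∀ v, Nontrivial (G v)]
    (a : GraphProduct Γ G) :
    ∃ (g : GraphProduct Γ G) (l : List (Σ u, G u)),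
      GraphCyclicallyReduced Γ G l ∧ a = g * wordProd Γ G l * g⁻¹ := by
  obtain ⟨l, rfl⟩ := exists_word_s6 Γ G a
  obtain ⟨g, l', hr, he⟩ := key Γ G l.length l le_rfl
  exact ⟨g, l', hr, he⟩
end

section
/- Let G be a group with finite generating set X, H ⊆ G a subgroup, and r : G → H a surjective group homomorphism which restricts to the identity on H (a retraction). Endow H with the finite generating set r(X) and let K = max_{s∈X} ‖r(s)‖_G. Then for every n ≥ 1, CLF_H(n) ≤ CLF_G(K·n), where CLF denotes the conjugacy length function. -/
private lemma wlen_le {H : Type*} [Group H] {S : Set H} {g : H} {l : List H}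
    (hl : ∀ x ∈ l, x ∈ S ∨ x⁻¹ ∈ S) (hp : l.prod = g) : wlen S g ≤ l.length :=
  Nat.sInf_le ⟨l, hl, hp, rfl⟩

private lemma wlen_spec {H : Type*} [Group H] {S : Set H}
    (hgen : Subgroup.closure S = ⊤) (g : H) :
    ∃ l : List H, (∀ x ∈ l, x ∈ S ∨ x⁻¹ ∈ S) ∧ l.prod = g ∧ l.length = wlen S g := by
  have hg : g ∈ Subgroup.closure S := by rw [hgen]; trivial
  have hne : {n | ∃ l : List H, (∀ x ∈ l, x ∈ S ∨ x⁻¹ ∈ S) ∧ l.prod = g ∧ l.length = n}.Nonempty := by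
    have : ∃ l : List H, (∀ x ∈ l, x ∈ S ∨ x⁻¹ ∈ S) ∧ l.prod = g := by
      induction hg using Subgroup.closure_induction with
      | mem x hx => exact ⟨[x], by simp [hx]⟩
      | one => exact ⟨[], by simp⟩
      | mul x y hx hy ihx ihy =>
        obtain ⟨l1, h1, p1⟩ := ihx
        obtain ⟨l2, h2, p2⟩ := ihy
        refine ⟨l1 ++ l2, ?_, by simp [p1, p2]⟩
        intro z hz
        rcases List.mem_append.1 hz with h | h
        · exact h1 z h
        · exact h2 z h
      | inv x hx ihx =>
        obtain ⟨l1, h1, p1⟩ := ihx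
        refine ⟨(l1.map (·⁻¹)).reverse, ?_, ?_⟩
        · intro z hz
          simp only [List.mem_reverse, List.mem_map] at hz
          obtain ⟨y, hy, rfl⟩ := hz
          rcases h1 y hy with h | h
          · exact Or.inr (by simpa using h)
          · exact Or.inl h
        · rw [← p1, ← List.prod_inv_reverse]
    obtain ⟨l, h1, h2⟩ := this
    exact ⟨l.length, l, h1, h2, rfl⟩
  exact Nat.sInf_mem hne

/-- A word for `g⁻¹` of the same length, given a word for `g`. -/
private lemma word_inv {H : Type*} [Group H] {S : Set H} {g : H} {l : List H}
    (hl : ∀ x ∈ l, x ∈ S ∨ x⁻¹ ∈ S) (hp : l.prod = g) :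
    ∃ w : List H, (∀ x ∈ w, x ∈ S ∨ x⁻¹ ∈ S) ∧ w.prod = g⁻¹ ∧ w.length = l.length := by
  refine ⟨(l.map (·⁻¹)).reverse, ?_, ?_, by simp⟩
  · intro z hz
    simp only [List.mem_reverse, List.mem_map] at hz
    obtain ⟨y, hy, rfl⟩ := hz
    rcases hl y hy with h | h
    · exact Or.inr (by simpa using h)
    · exact Or.inl h
  · rw [← hp, ← List.prod_inv_reverse]

private lemma exists_word_prod {H : Type*} [Group H] {S : Set H} (K : ℕ) :
    ∀ (l : List H), (∀ x ∈ l, ∃ w : List H, (∀ y ∈ w, y ∈ S ∨ y⁻¹ ∈ S) ∧ w.prod = x ∧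
      w.length ≤ K) →
    ∃ w : List H, (∀ y ∈ w, y ∈ S ∨ y⁻¹ ∈ S) ∧ w.prod = l.prod ∧ w.length ≤ K * l.length := by
  intro l
  induction l with
  | nil => exact fun _ => ⟨[], by simp⟩
  | cons x t ih =>
    intro h
    obtain ⟨w1, hw1, p1, len1⟩ := h x (by simp)
    obtain ⟨w2, hw2, p2, len2⟩ := ih fun y hy => h y (by simp [hy])
    refine ⟨w1 ++ w2, ?_, by simp [p1, p2], ?_⟩
    · intro z hz
      rcases List.mem_append.1 hz with hz | hz
      · exact hw1 z hz
      · exact hw2 z hz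
    · simp only [List.length_append, List.length_cons]
      calc w1.length + w2.length ≤ K + K * t.length := Nat.add_le_add len1 len2
        _ = K * (t.length + 1) := by ring

/-- If `r : G → H` is a retraction onto a subgroup `H` of a finitely generated group `G`,
then `CLF_H(n) ≤ CLF_G(K·n)` where `K = max_{s ∈ X} ‖r(s)‖_G`. -/
theorem clf_of_retract {G : Type*} [Group G] (X : Finset G)
    (hgen : Subgroup.closure (X : Set G) = ⊤)
    (H : Subgroup G) (r : G →* H) (hsur : Function.Surjective r)
    (hr : ∀ h : H, r h = h) (n : ℕ) (hn : 1 ≤ n) :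
    CLF (⇑r '' (X : Set G)) n
      ≤ CLF (X : Set G) ((X.sup fun s => wlen (X : Set G) ((r s : H) : G)) * n) := by
  set K := X.sup fun s => wlen (X : Set G) ((r s : H) : G) with hK
  -- r '' X generates H
  have hgenH : Subgroup.closure (⇑r '' (X : Set G)) = ⊤ := by
    rw [← MonoidHom.map_closure, hgen, Subgroup.map_top_of_surjective r hsur]
  -- key estimate A: word length of a coerced element of H in G
  have keyA : ∀ a : H, wlen (X : Set G) (a : G) ≤ K * wlen (⇑r '' (X : Set G)) a := by
    intro a
    obtain ⟨l, hl, hp, hlen⟩ := wlen_spec hgenH a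
    have hmap : ∀ x ∈ l.map (H.subtype), ∃ w : List G,
        (∀ y ∈ w, y ∈ (X : Set G) ∨ y⁻¹ ∈ (X : Set G)) ∧ w.prod = x ∧ w.length ≤ K := by
      intro x hx
      simp only [List.mem_map] at hx
      obtain ⟨y, hy, rfl⟩ := hx
      have key : ∀ z : H, z ∈ ⇑r '' (X : Set G) → ∃ w : List G,
          (∀ u ∈ w, u ∈ (X : Set G) ∨ u⁻¹ ∈ (X : Set G)) ∧ w.prod = (z : G) ∧ w.length ≤ K := by
        intro z hz
        obtain ⟨s, hs, rfl⟩ := hz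
        obtain ⟨w, hw, hwp, hwl⟩ := wlen_spec hgen ((r s : H) : G)
        refine ⟨w, hw, hwp, ?_⟩
        rw [hwl]
        exact Finset.le_sup (f := fun s => wlen (X : Set G) ((r s : H) : G)) hs
      rcases hl y hy with h | h
      · exact key y h
      · obtain ⟨w, hw, hwp, hwl⟩ := key y⁻¹ h
        obtain ⟨w', hw', hwp', hwl'⟩ := word_inv hw hwp
        exact ⟨w', hw', by simpa using hwp', hwl' ▸ hwl⟩
    obtain ⟨w, hw, hwp, hwl⟩ := exists_word_prod K (l.map (H.subtype)) hmap
    have hprod : (l.map (H.subtype)).prod = (a : G) := by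
      rw [← map_list_prod H.subtype l, hp]; rfl
    have := wlen_le hw (hwp.trans hprod)
    calc wlen (X : Set G) (a : G) ≤ w.length := this
      _ ≤ K * (l.map (H.subtype)).length := hwl
      _ = K * wlen (⇑r '' (X : Set G)) a := by rw [List.length_map, hlen]
  -- key estimate B: word length of r c in H is at most word length of c in G
  have keyB : ∀ c : G, wlen (⇑r '' (X : Set G)) (r c) ≤ wlen (X : Set G) c := by
    intro c
    obtain ⟨l, hl, hp, hlen⟩ := wlen_spec hgen c
    have hmem : ∀ x ∈ l.map r, x ∈ ⇑r '' (X : Set G) ∨ x⁻¹ ∈ ⇑r '' (X : Set G) := by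
      intro x hx
      simp only [List.mem_map] at hx
      obtain ⟨y, hy, rfl⟩ := hx
      rcases hl y hy with h | h
      · exact Or.inl ⟨y, h, rfl⟩
      · exact Or.inr ⟨y⁻¹, h, by simp⟩
    have hprod : (l.map r).prod = r c := by rw [← map_list_prod r l, hp]
    have := wlen_le hmem hprod
    rwa [List.length_map, hlen] at this
  -- main argument
  unfold CLF
  refine iSup₂_le fun a b => iSup_le fun hab => ?_
  obtain ⟨⟨c, hc⟩, hlen⟩ := hab
  -- the conjugation equation in G
  have hcG : (c : G) * (a : G) * (c : G)⁻¹ = (b : G) := by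
    simpa only [map_mul, map_inv, Subgroup.coe_subtype] using congrArg H.subtype hc
  have hne : {k | ∃ d : G, d * (a : G) * d⁻¹ = (b : G) ∧ wlen (X : Set G) d = k}.Nonempty :=
    ⟨wlen (X : Set G) (c : G), (c : G), hcG, rfl⟩
  obtain ⟨c₀, hc₀, hc₀len⟩ := Nat.sInf_mem hne
  -- r c₀ conjugates a to b in H
  have hrc : r c₀ * a * (r c₀)⁻¹ = b := by
    have := congrArg r hc₀
    simpa only [map_mul, map_inv, hr] using this
  have h1 : sInf {k | ∃ d : H, d * a * d⁻¹ = b ∧ wlen (⇑r '' (X : Set G)) d = k}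
      ≤ sInf {k | ∃ d : G, d * (a : G) * d⁻¹ = (b : G) ∧ wlen (X : Set G) d = k} := by
    rw [← hc₀len]
    exact le_trans (Nat.sInf_le ⟨r c₀, hrc, rfl⟩) (keyB c₀)
  have h2 : wlen (X : Set G) (a : G) + wlen (X : Set G) (b : G) ≤ K * n := by
    calc wlen (X : Set G) (a : G) + wlen (X : Set G) (b : G)
        ≤ K * wlen (⇑r '' (X : Set G)) a + K * wlen (⇑r '' (X : Set G)) b :=
          Nat.add_le_add (keyA a) (keyA b)
      _ = K * (wlen (⇑r '' (X : Set G)) a + wlen (⇑r '' (X : Set G)) b) := by ring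
      _ ≤ K * n := Nat.mul_le_mul_left K hlen
  calc ((sInf {k | ∃ d : H, d * a * d⁻¹ = b ∧ wlen (⇑r '' (X : Set G)) d = k} : ℕ) : ℕ∞)
      ≤ ((sInf {k | ∃ d : G, d * (a : G) * d⁻¹ = (b : G) ∧ wlen (X : Set G) d = k} : ℕ) : ℕ∞) := by
        exact_mod_cast h1
    _ ≤ CLF (X : Set G) (K * n) := by
        unfold CLF
        exact le_iSup₂_of_le (a : G) (b : G) (le_iSup_of_le ⟨⟨(c : G), hcG⟩, h2⟩ le_rfl)
end
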